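/- Let d ≥ 1. There exist constants c₂ > 0 and c₃ > 0, depending only on d, such that for every 0 < δ < 1/4 the function g : 𝕋^d → ℝ defined by g(x) = 1/(ω_d δ^d) if dist(x, 0) ≤ δ and g(x) = 0 otherwise satisfies: ĝ(0) = 1, and ĝ(k) ≥ c₂ for every k ∈ ℤ^d with 0 < ‖k‖_2 ≤ c₃/δ, where ĝ(k) = ∫_{𝕋^d} g(y) e^{−2πi⟨k,y⟩} dy (which is real since g is even). -/

import Mathlib

/-!
By periodicity, the Fourier integral over `[0, 1)^d` may be taken over `[-1/2, 1/2)^d` instead.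
On that cube the torus distance to `0` is the Euclidean norm, so for `δ < 1/2` the torus ball is the
Euclidean ball `B_δ` and `ĝ(k) = (ω_d δ^d)⁻¹ ∫_{B_δ} e^{-2πi⟨k,y⟩} dy`; at `k = 0` this is `1`.
As `B_δ = -B_δ`, the integral equals its conjugate, hence is real. If `‖k‖ δ ≤ 1/6`, Cauchy–Schwarz
gives `|2π⟨k,y⟩| ≤ π/3` on `B_δ`, so the real part of the integrand is at least `cos (π/3) = 1/2`,
and `ĝ(k) ≥ 1/2`.
-/

open Filter MeasureTheory

/-- The Euclidean (ℓ²) norm of a vector in ℝ^d. -/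
noncomputable def e2norm {d : ℕ} (v : Fin d → ℝ) : ℝ := Real.sqrt (∑ i, (v i) ^ 2)

/-- The Euclidean distance on the torus ℝ^d/ℤ^d. -/
noncomputable def torusDist {d : ℕ} (x y : Fin d → ℝ) : ℝ :=
  ⨅ k : Fin d → ℤ, e2norm (fun i => x i - y i - (k i : ℝ))

/-- ω_d : the Lebesgue volume of the unit Euclidean ball in ℝ^d. -/
noncomputable def unitBallVol (d : ℕ) : ℝ :=
  (volume {v : Fin d → ℝ | e2norm v ≤ 1}).toReal

/-- The k-th Fourier coefficient of a (1-periodic) function g on 𝕋^d, computed over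
the fundamental domain [0,1)^d:  ĝ(k) = ∫_{𝕋^d} g(y) e^{-2πi⟨k,y⟩} dy. -/
noncomputable def fourierCoefTd {d : ℕ} (g : (Fin d → ℝ) → ℝ) (k : Fin d → ℤ) : ℂ :=
  ∫ y in (Set.univ.pi fun _ : Fin d => Set.Ico (0 : ℝ) 1),
    (g y : ℂ) * Complex.exp (-(2 * (Real.pi : ℂ) * Complex.I * ((∑ i, (k i : ℝ) * y i : ℝ) : ℂ)))

open Set Metric Complex ComplexConjugate Pointwise

section E2norm

variable {d : ℕ}

lemma e2norm_eq_norm_toLp (v : Fin d → ℝ) :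
    e2norm v = ‖(WithLp.toLp 2 v : EuclideanSpace ℝ (Fin d))‖ := by
  simp [e2norm, EuclideanSpace.norm_eq]

lemma abs_apply_le_e2norm (v : Fin d → ℝ) (i : Fin d) : |v i| ≤ e2norm v := by
  simpa [e2norm_eq_norm_toLp] using PiLp.norm_apply_le (WithLp.toLp 2 v : EuclideanSpace ℝ (Fin d)) i

lemma e2norm_le_e2norm_of_abs_le {v w : Fin d → ℝ} (h : ∀ i, |v i| ≤ |w i|) :
    e2norm v ≤ e2norm w :=
  Real.sqrt_le_sqrt (Finset.sum_le_sum fun i _ => sq_le_sq.mpr (h i))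

lemma abs_sum_mul_le_e2norm_mul (v w : Fin d → ℝ) : |∑ i, v i * w i| ≤ e2norm v * e2norm w := by
  simpa [e2norm_eq_norm_toLp, PiLp.inner_apply, mul_comm] using
    abs_real_inner_le_norm (WithLp.toLp 2 v : EuclideanSpace ℝ (Fin d)) (WithLp.toLp 2 w)

lemma setOf_e2norm_le_eq_preimage (r : ℝ) :
    {v : Fin d → ℝ | e2norm v ≤ r} = WithLp.toLp 2 ⁻¹' closedBall (0 : EuclideanSpace ℝ (Fin d)) r := by
  ext v
  simp [e2norm_eq_norm_toLp]

lemma measurableSet_setOf_e2norm_le (r : ℝ) : MeasurableSet {v : Fin d → ℝ | e2norm v ≤ r} := by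
  rw [setOf_e2norm_le_eq_preimage]
  exact measurableSet_closedBall.preimage (PiLp.volume_preserving_toLp (Fin d)).measurable

lemma neg_setOf_e2norm_le (r : ℝ) : -{v : Fin d → ℝ | e2norm v ≤ r} = {v | e2norm v ≤ r} := by
  ext v
  simp [setOf_e2norm_le_eq_preimage]

lemma volume_setOf_e2norm_le (r : ℝ) :
    volume {v : Fin d → ℝ | e2norm v ≤ r} = volume (closedBall (0 : EuclideanSpace ℝ (Fin d)) r) := by
  rw [setOf_e2norm_le_eq_preimage, (PiLp.volume_preserving_toLp (Fin d)).measure_preimage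
    measurableSet_closedBall.nullMeasurableSet]

lemma volume_setOf_e2norm_le_ne_top (r : ℝ) : volume {v : Fin d → ℝ | e2norm v ≤ r} ≠ ⊤ := by
  rw [volume_setOf_e2norm_le]
  exact measure_closedBall_lt_top.ne

lemma unitBallVol_pos : 0 < unitBallVol d := by
  rw [unitBallVol, volume_setOf_e2norm_le]
  exact ENNReal.toReal_pos (measure_closedBall_pos _ _ one_pos).ne' measure_closedBall_lt_top.ne

lemma measureReal_setOf_e2norm_le {r : ℝ} (hr : 0 ≤ r) :
    volume.real {v : Fin d → ℝ | e2norm v ≤ r} = r ^ d * unitBallVol d := by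
  rw [measureReal_def, unitBallVol, volume_setOf_e2norm_le, volume_setOf_e2norm_le,
    Measure.addHaar_closedBall' _ _ hr, finrank_euclideanSpace_fin, ENNReal.toReal_mul,
    ENNReal.toReal_ofReal (by positivity)]

end E2norm

section Torus

variable {d : ℕ}

lemma abs_le_abs_sub_intCast {y : ℝ} (hy : |y| ≤ 1 / 2) (k : ℤ) : |y| ≤ |y - k| := by
  rcases eq_or_ne k 0 with rfl | hk
  · simp
  · have : (1 : ℝ) ≤ |(k : ℝ)| := by exact_mod_cast Int.one_le_abs hk
    linarith [abs_sub_abs_le_abs_sub (k : ℝ) y, abs_sub_comm (k : ℝ) y]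

lemma torusDist_zero_eq_e2norm {y : Fin d → ℝ} (hy : ∀ i, |y i| ≤ 1 / 2) :
    torusDist y 0 = e2norm y := by
  refine le_antisymm ?_ (le_ciInf fun k => e2norm_le_e2norm_of_abs_le fun i => ?_)
  · refine (ciInf_le ⟨0, ?_⟩ 0).trans_eq (by simp)
    rintro _ ⟨k, rfl⟩
    exact Real.sqrt_nonneg _
  · simpa using abs_le_abs_sub_intCast (hy i) (k i)

lemma torusDist_intCast_add (m : Fin d → ℤ) (x y : Fin d → ℝ) :
    torusDist ((fun i => (m i : ℝ)) + x) y = torusDist x y := by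
  unfold torusDist
  conv_rhs => rw [← (Equiv.subRight m).iInf_comp]
  refine iInf_congr fun k => congrArg e2norm (funext fun i => ?_)
  simp only [Pi.add_apply, Equiv.subRight_apply, Pi.sub_apply, Int.cast_sub]
  ring

end Torus

section Character

variable {d : ℕ}

noncomputable def torusChar (k : Fin d → ℤ) (y : Fin d → ℝ) : ℂ :=
  Complex.exp (-(2 * (Real.pi : ℂ) * Complex.I * ((∑ i, (k i : ℝ) * y i : ℝ) : ℂ)))

lemma fourierCoefTd_eq_setIntegral (g : (Fin d → ℝ) → ℝ) (k : Fin d → ℤ) :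
    fourierCoefTd g k = ∫ y in univ.pi fun _ => Ico (0 : ℝ) 1, (g y : ℂ) * torusChar k y :=
  rfl

lemma torusChar_eq_exp_mul_I (k : Fin d → ℤ) (y : Fin d → ℝ) :
    torusChar k y = Complex.exp (((-(2 * Real.pi * ∑ i, (k i : ℝ) * y i) : ℝ) : ℂ) * Complex.I) := by
  rw [torusChar]
  push_cast
  ring_nf

lemma torusChar_zero_left (y : Fin d → ℝ) : torusChar 0 y = 1 := by
  simp [torusChar]

lemma norm_torusChar (k : Fin d → ℤ) (y : Fin d → ℝ) : ‖torusChar k y‖ = 1 := by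
  rw [torusChar_eq_exp_mul_I, Complex.norm_exp_ofReal_mul_I]

lemma re_torusChar (k : Fin d → ℤ) (y : Fin d → ℝ) :
    (torusChar k y).re = Real.cos (2 * Real.pi * ∑ i, (k i : ℝ) * y i) := by
  rw [torusChar_eq_exp_mul_I, Complex.exp_ofReal_mul_I_re, Real.cos_neg]

lemma torusChar_neg_right (k : Fin d → ℤ) (y : Fin d → ℝ) :
    torusChar k (-y) = conj (torusChar k y) := by
  rw [torusChar_eq_exp_mul_I, torusChar_eq_exp_mul_I, ← Complex.exp_conj]
  simp [Complex.conj_ofReal, Finset.sum_neg_distrib, map_ofNat]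

lemma torusChar_intCast_add (k m : Fin d → ℤ) (x : Fin d → ℝ) :
    torusChar k ((fun i => (m i : ℝ)) + x) = torusChar k x := by
  refine Complex.exp_eq_exp_iff_exists_int.mpr ⟨-∑ i, k i * m i, ?_⟩
  simp only [Pi.add_apply, mul_add, Finset.sum_add_distrib]
  push_cast
  ring

lemma continuous_torusChar (k : Fin d → ℤ) : Continuous (torusChar k) := by
  unfold torusChar
  fun_prop

lemma integrableOn_torusChar (k : Fin d → ℤ) {s : Set (Fin d → ℝ)} (hs : volume s ≠ ⊤) :
    IntegrableOn (torusChar k) s :=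
  Measure.integrableOn_of_bounded hs (continuous_torusChar k).aestronglyMeasurable
    (M := 1) (ae_of_all _ fun y => (norm_torusChar k y).le)

lemma half_le_re_torusChar {k : Fin d → ℤ} {y : Fin d → ℝ}
    (h : e2norm (fun i => (k i : ℝ)) * e2norm y ≤ 1 / 6) : 1 / 2 ≤ (torusChar k y).re := by
  have hθ : |2 * Real.pi * ∑ i, (k i : ℝ) * y i| ≤ Real.pi / 3 := by
    rw [abs_mul, abs_of_pos Real.two_pi_pos]
    nlinarith [abs_sum_mul_le_e2norm_mul (fun i => (k i : ℝ)) y, Real.pi_pos]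
  rw [re_torusChar, ← Real.cos_abs, ← Real.cos_pi_div_three]
  exact Real.cos_le_cos_of_nonneg_of_le_pi (abs_nonneg _) (by linarith [Real.pi_pos]) hθ

end Character

section Integrals

variable {α : Type*} [MeasurableSpace α] {μ : Measure α}

lemma im_setIntegral_eq_zero_of_neg_eq_conj [AddGroup α] [MeasurableNeg α] [μ.IsNegInvariant]
    {s : Set α} (hs : MeasurableSet s) (hs_neg : -s = s) {f : α → ℂ}
    (hf : ∀ x, f (-x) = conj (f x)) : (∫ x in s, f x ∂μ).im = 0 := by
  have hind : ∀ x, s.indicator f (-x) = conj (s.indicator f x) := by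
    intro x
    by_cases hx : x ∈ s
    · have hx' : -x ∈ s := by rw [← hs_neg]; simpa using hx
      simp [hx, hx', hf]
    · have hx' : -x ∉ s := by rw [← hs_neg]; simpa using hx
      simp [hx, hx']
  rw [← integral_indicator hs, ← Complex.conj_eq_iff_im, ← integral_conj]
  simp_rw [← hind]
  exact integral_neg_eq_self _ μ

lemma le_re_setIntegral_of_le_re {s : Set α} (hs : MeasurableSet s) (hμs : μ s ≠ ⊤) {f : α → ℂ}
    (hf : IntegrableOn f s μ) {c : ℝ} (hc : ∀ x ∈ s, c ≤ (f x).re) :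
    c * μ.real s ≤ (∫ x in s, f x ∂μ).re := by
  rw [← RCLike.re_to_complex, ← integral_re hf]
  exact setIntegral_ge_of_const_le_real hs hμs hc hf.re

end Integrals

lemma setIntegral_unitCube_eq_of_intPeriodic {d : ℕ} {E : Type*} [NormedAddCommGroup E] [NormedSpace ℝ E]
    {F : (Fin d → ℝ) → E} (hF : ∀ (m : Fin d → ℤ) x, F ((fun i => (m i : ℝ)) + x) = F x)
    (t : Fin d → ℝ) :
    ∫ y in univ.pi fun _ => Ico (0 : ℝ) 1, F y = ∫ y in univ.pi fun i => Ico (t i) (t i + 1), F y := by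
  set L := (Submodule.span ℤ (range (Pi.basisFun ℝ (Fin d)))).toAddSubgroup
  -- instance search does not see through `toAddSubgroup`
  have : Countable L := inferInstanceAs (Countable (Submodule.span ℤ (range (Pi.basisFun ℝ (Fin d)))))
  have h₀ : IsAddFundamentalDomain L (univ.pi fun _ : Fin d => Ico (0 : ℝ) 1) := by
    rw [← ZSpan.fundamentalDomain_pi_basisFun]
    exact ZSpan.isAddFundamentalDomain' _ volume
  have ht : t +ᵥ (univ.pi fun _ : Fin d => Ico (0 : ℝ) 1) = univ.pi fun i => Ico (t i) (t i + 1) := by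
    ext x
    simp only [mem_vadd_set_iff_neg_vadd_mem, Set.mem_pi, mem_univ, mem_Ico, vadd_eq_add,
      Pi.add_apply, Pi.neg_apply, true_implies]
    refine forall_congr' fun i => ?_
    constructor <;> intro h <;> constructor <;> linarith [h.1, h.2]
  refine h₀.setIntegral_eq (ht ▸ h₀.vadd_of_comm t) fun g x => ?_
  obtain ⟨m, hm⟩ := (Submodule.mem_span_range_iff_exists_fun ℤ).mp g.2
  have hg : (g : Fin d → ℝ) = fun i => (m i : ℝ) := by
    rw [← hm]
    ext i
    simp [Pi.basisFun_apply, Finset.sum_apply, Pi.single_apply]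
  simpa [AddSubgroup.vadd_def, vadd_eq_add, hg] using hF m x

lemma fourierCoefTd_eq_mul_setIntegral_torusChar {d : ℕ} {g : (Fin d → ℝ) → ℝ} {c δ : ℝ}
    (hδ : δ < 1 / 2) (hg : ∀ y, g y = if torusDist y 0 ≤ δ then c else 0) (k : Fin d → ℤ) :
    fourierCoefTd g k = c * ∫ y in {v : Fin d → ℝ | e2norm v ≤ δ}, torusChar k y := by
  set A := {v : Fin d → ℝ | e2norm v ≤ δ}
  set Q := univ.pi fun _ : Fin d => Ico (-(1 / 2) : ℝ) (-(1 / 2) + 1)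
  have hperiodic : ∀ (m : Fin d → ℤ) x,
      (g ((fun i => (m i : ℝ)) + x) : ℂ) * torusChar k ((fun i => (m i : ℝ)) + x)
        = g x * torusChar k x := by
    intro m x
    rw [hg, hg, torusDist_intCast_add, torusChar_intCast_add]
  have hAQ : A ⊆ Q := fun y hy i _ => by
    have := abs_le.mp ((abs_apply_le_e2norm y i).trans hy)
    constructor <;> linarith [this.1, this.2]
  have hg_on_Q : ∀ y ∈ Q, (g y : ℂ) * torusChar k y = A.indicator (fun y => c * torusChar k y) y := by
    intro y hy
    have hcube : ∀ i, |y i| ≤ 1 / 2 := fun i => by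
      have := hy i (mem_univ i)
      rw [abs_le]
      constructor <;> linarith [this.1, this.2]
    by_cases hyA : y ∈ A
    · have : torusDist y 0 ≤ δ := (torusDist_zero_eq_e2norm hcube).trans_le hyA
      simp [hg, hyA, this]
    · have : ¬ torusDist y 0 ≤ δ := by rwa [torusDist_zero_eq_e2norm hcube]
      simp [hg, hyA, this]
  rw [fourierCoefTd_eq_setIntegral, setIntegral_unitCube_eq_of_intPeriodic hperiodic (fun _ => -(1 / 2)),
    setIntegral_congr_fun (MeasurableSet.univ_pi fun _ => measurableSet_Ico) hg_on_Q,
    setIntegral_indicator (measurableSet_setOf_e2norm_le δ), inter_eq_right.mpr hAQ, integral_const_mul]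

theorem stmt16_general (d : ℕ) :
    ∃ c₂ c₃ : ℝ, 0 < c₂ ∧ 0 < c₃ ∧
      ∀ (δ : ℝ), 0 < δ → δ < 1 / 4 →
        ∀ g : (Fin d → ℝ) → ℝ,
          (∀ y, g y = if torusDist y 0 ≤ δ then 1 / (unitBallVol d * δ ^ d) else 0) →
          fourierCoefTd g 0 = 1 ∧
          ∀ k : Fin d → ℤ, k ≠ 0 → e2norm (fun i => (k i : ℝ)) ≤ c₃ / δ →
            (fourierCoefTd g k).im = 0 ∧ c₂ ≤ (fourierCoefTd g k).re := by
  refine ⟨1 / 2, 1 / 6, by norm_num, by norm_num, fun δ hδ hδ4 g hg => ?_⟩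
  set c := 1 / (unitBallVol d * δ ^ d)
  set A := {v : Fin d → ℝ | e2norm v ≤ δ}
  have hA : MeasurableSet A := measurableSet_setOf_e2norm_le δ
  have hĝ := fourierCoefTd_eq_mul_setIntegral_torusChar (by linarith) hg
  have hωδ : 0 < unitBallVol d * δ ^ d := mul_pos unitBallVol_pos (pow_pos hδ d)
  have hc : 0 < c := one_div_pos.mpr hωδ
  have hmass : c * volume.real A = 1 := by
    rw [measureReal_setOf_e2norm_le hδ.le, mul_comm (δ ^ d)]
    exact one_div_mul_cancel hωδ.ne'
  refine ⟨?_, fun k _ hk => ⟨?_, ?_⟩⟩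
  · simp only [hĝ, torusChar_zero_left, setIntegral_const, Complex.real_smul, mul_one]
    rw [← Complex.ofReal_mul, hmass, Complex.ofReal_one]
  · rw [hĝ, Complex.im_ofReal_mul, im_setIntegral_eq_zero_of_neg_eq_conj hA
      (neg_setOf_e2norm_le δ) (torusChar_neg_right k), mul_zero]
  · have hre : ∀ y ∈ A, 1 / 2 ≤ (torusChar k y).re := fun y hy => half_le_re_torusChar <|
      (mul_le_mul hk hy (Real.sqrt_nonneg _) (by positivity)).trans_eq (by field_simp)
    have hI := le_re_setIntegral_of_le_re hA (volume_setOf_e2norm_le_ne_top δ)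
      (integrableOn_torusChar k (volume_setOf_e2norm_le_ne_top δ)) hre
    rw [hĝ, Complex.re_ofReal_mul]
    calc 1 / 2 = c * (1 / 2 * volume.real A) := by linarith
      _ ≤ _ := mul_le_mul_of_nonneg_left hI hc.le

/-- For d ≥ 1 there are constants c₂, c₃ > 0 depending only on d such
that for every 0 < δ < 1/4, the normalized indicator g of the δ-ball on 𝕋^d has
ĝ(0) = 1 and ĝ(k) real with ĝ(k) ≥ c₂ for all k ∈ ℤ^d with 0 < ‖k‖₂ ≤ c₃/δ. -/
theorem stmt16 (d : ℕ) (hd : 1 ≤ d) :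
    ∃ c₂ c₃ : ℝ, 0 < c₂ ∧ 0 < c₃ ∧
      ∀ (δ : ℝ), 0 < δ → δ < 1 / 4 →
        ∀ g : (Fin d → ℝ) → ℝ,
          (∀ y, g y = if torusDist y 0 ≤ δ then 1 / (unitBallVol d * δ ^ d) else 0) →
          fourierCoefTd g 0 = 1 ∧
          ∀ k : Fin d → ℤ, k ≠ 0 → e2norm (fun i => (k i : ℝ)) ≤ c₃ / δ →
            (fourierCoefTd g k).im = 0 ∧ c₂ ≤ (fourierCoefTd g k).re :=
  stmt16_general d
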